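/- arXiv:2305.00308 — 2 statements merged into one kernel-verified Lean document; each statement's English description precedes it below -/
import Mathlib

section
/- Let f : ℕ → ℕ → ℕ be defined by f(0,h) = 0 for all h, f(n,0) = 1 for all n ≥ 1, and f(n,h) = f(n,h-1) + f(⌊n/2⌋,h) + f(n-1-⌊n/2⌋,h) for all n,h ≥ 1. Then for all natural numbers n ≥ 2 and h ≥ 1, viewing the values as real numbers, f(n,h) ≤ n^(2.45 + log₂(1 + (h-1)/(log₂ n))), where log₂ denotes the real base-2 logarithm and the power is a real power. -/
/-!
Unfolding the recursion in `h` shows `f n (h + 1) ≤ n * C(⌊log₂ n⌋ + h, h)`: each halving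
lowers `⌊log₂ n⌋` by one, and Pascal's rule absorbs the two half-size calls. With
`k = ⌊log₂ n⌋ ≤ L = log₂ n` and `x = h - 1`, the binomial coefficient is at most
`(k + x)^k / k! ≤ (e (1 + x/k))^k ≤ (e (1 + x/L))^L`, the last step because `t ↦ (1 + x/t)^t`
is increasing. Finally `y^L = n^(log₂ y)`, and the extra factor `n` contributes
`n^(1 + log₂ e) ≤ n^2.45`.
-/

open Real
open scoped Nat

namespace Nat

lemma pred_mul_choose_log_half_le (n h : ℕ) :
    (n - 1) * (log 2 (n / 2) + h + 1).choose (h + 1) ≤ n * (log 2 n + h).choose (h + 1) := by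
  rcases lt_or_ge n 2 with hn | hn
  · interval_cases n <;> simp
  · have hlog : log 2 (n / 2) + 1 = log 2 n := by
      have := log_pos (b := 2) (by norm_num) hn
      rw [log_div_base]; omega
    rw [add_right_comm, hlog]
    exact Nat.mul_le_mul_right _ (sub_le n 1)

end Nat

namespace WidthRecursion

variable {f : ℕ → ℕ → ℕ}

lemma apply_one_le (hf0 : ∀ h, f 0 h = 0) (hfn0 : ∀ n, 1 ≤ n → f n 0 = 1)
    (hrec : ∀ n h, 1 ≤ n → 1 ≤ h → f n h = f n (h - 1) + f (n / 2) h + f (n - 1 - n / 2) h)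
    (n : ℕ) : f n 1 ≤ n := by
  induction n using Nat.strong_induction_on with
  | _ n ih =>
    rcases Nat.eq_zero_or_pos n with rfl | hn
    · simp [hf0]
    · have := ih (n / 2) (by omega)
      have := ih (n - 1 - n / 2) (by omega)
      rw [hrec n 1 hn le_rfl, hfn0 n hn]
      omega

lemma apply_succ_le_mul_choose_log (hf0 : ∀ h, f 0 h = 0) (hfn0 : ∀ n, 1 ≤ n → f n 0 = 1)
    (hrec : ∀ n h, 1 ≤ n → 1 ≤ h → f n h = f n (h - 1) + f (n / 2) h + f (n - 1 - n / 2) h)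
    (h n : ℕ) : f n (h + 1) ≤ n * (Nat.log 2 n + h).choose h := by
  induction h generalizing n with
  | zero => simpa using apply_one_le hf0 hfn0 hrec n
  | succ h ih =>
    induction n using Nat.strong_induction_on with
    | _ n ihn =>
      rcases Nat.eq_zero_or_pos n with rfl | hn
      · simp [hf0]
      set m := n - 1 - n / 2
      have hhalf : f (n / 2) (h + 2) ≤ n / 2 * (Nat.log 2 (n / 2) + h + 1).choose (h + 1) :=
        ihn (n / 2) (by omega)
      have hrest : f m (h + 2) ≤ m * (Nat.log 2 (n / 2) + h + 1).choose (h + 1) :=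
        (ihn m (by omega)).trans <| Nat.mul_le_mul_left _ <|
          Nat.choose_le_choose _ <| by
            have : Nat.log 2 m ≤ Nat.log 2 (n / 2) := Nat.log_mono_right (by omega)
            omega
      have hsum : n / 2 + m = n - 1 := by omega
      calc f n (h + 2)
          = f n (h + 1) + f (n / 2) (h + 2) + f m (h + 2) := hrec n (h + 2) hn (by omega)
        _ ≤ n * (Nat.log 2 n + h).choose h
              + (n - 1) * (Nat.log 2 (n / 2) + h + 1).choose (h + 1) := by
          rw [← hsum, add_mul, ← add_assoc]
          exact Nat.add_le_add (Nat.add_le_add (ih n) hhalf) hrest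
        _ ≤ n * (Nat.log 2 n + h).choose h + n * (Nat.log 2 n + h).choose (h + 1) :=
          Nat.add_le_add_left (Nat.pred_mul_choose_log_half_le n h) _
        _ = n * (Nat.log 2 n + (h + 1)).choose (h + 1) := by
          rw [← mul_add, ← Nat.choose_succ_succ', add_assoc]

end WidthRecursion

lemma Nat.choose_add_le_exp_mul_pow (k m : ℕ) :
    ((k + m).choose m : ℝ) ≤ exp k * (1 + m / k) ^ k := by
  rcases k.eq_zero_or_pos with rfl | hk
  · simp
  have hk' : (0 : ℝ) < k := by exact_mod_cast hk
  calc ((k + m).choose m : ℝ) = (k + m).choose k := by rw [Nat.choose_symm_add]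
    _ ≤ ((k + m : ℕ) : ℝ) ^ k / k ! := Nat.choose_le_pow_div k (k + m)
    _ = (k : ℝ) ^ k / k ! * (1 + m / k) ^ k := by
      rw [div_mul_eq_mul_div, ← mul_pow, mul_one_add, mul_div_cancel₀ _ hk'.ne']; push_cast; rfl
    _ ≤ exp k * (1 + m / k) ^ k := by
      gcongr; exact Real.pow_div_factorial_le_exp _ hk'.le k

lemma one_add_div_rpow_le {x s t : ℝ} (hx : 0 ≤ x) (hs : 0 < s) (hst : s ≤ t) :
    (1 + x / s) ^ s ≤ (1 + x / t) ^ t := by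
  have ht : 0 < t := hs.trans_le hst
  have hbase : 1 + x / s ≤ (1 + x / t) ^ (t / s) := by
    have := one_add_mul_self_le_rpow_one_add (s := x / t) (by linarith [div_nonneg hx ht.le])
      ((one_le_div hs).mpr hst)
    rwa [div_mul_div_cancel₀' ht.ne'] at this
  calc (1 + x / s) ^ s ≤ ((1 + x / t) ^ (t / s)) ^ s := by gcongr
    _ = (1 + x / t) ^ t := by
      rw [← rpow_mul (by positivity), div_mul_cancel₀ _ hs.ne']

lemma rpow_logb_comm (b : ℝ) {x y : ℝ} (hx : 0 < x) (hy : 0 < y) :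
    x ^ logb b y = y ^ logb b x := by
  rw [rpow_def_of_pos hx, rpow_def_of_pos hy, logb, logb, mul_div_left_comm, mul_comm]

lemma one_add_logb_two_exp_one_lt : 1 + logb 2 (exp 1) < 2.45 := by
  have := log_two_gt_d9
  rw [logb, log_exp, ← lt_sub_iff_add_lt', div_lt_iff₀ (by positivity)]
  norm_num at this ⊢
  linarith

lemma Nat.choose_add_le_exp_mul_rpow {k m : ℕ} {t : ℝ} (hk : 0 < k) (hkt : k ≤ t) :
    ((k + m).choose m : ℝ) ≤ exp t * (1 + m / t) ^ t := by
  have hk' : (0 : ℝ) < k := by exact_mod_cast hk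
  calc ((k + m).choose m : ℝ) ≤ exp k * (1 + m / k) ^ (k : ℝ) := by
        rw [rpow_natCast]; exact Nat.choose_add_le_exp_mul_pow k m
    _ ≤ exp t * (1 + m / t) ^ t := by
      gcongr
      exact one_add_div_rpow_le (Nat.cast_nonneg m) hk' hkt

lemma mul_exp_mul_rpow_logb_eq (b : ℝ) {n y : ℝ} (hn : 0 < n) (hy : 0 < y) :
    n * (exp (logb b n) * y ^ logb b n) = n ^ (1 + logb b (exp 1) + logb b y) := by
  rw [rpow_add hn, rpow_add hn, rpow_one, ← exp_one_rpow, rpow_logb_comm b (exp_pos 1) hn,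
    rpow_logb_comm b hy hn, mul_assoc]

theorem stmt_4 (f : ℕ → ℕ → ℕ)
    (hf0 : ∀ h, f 0 h = 0)
    (hfn0 : ∀ n, 1 ≤ n → f n 0 = 1)
    (hrec : ∀ n h, 1 ≤ n → 1 ≤ h →
      f n h = f n (h - 1) + f (n / 2) h + f (n - 1 - n / 2) h) :
    ∀ n h : ℕ, 2 ≤ n → 1 ≤ h →
      (f n h : ℝ) ≤ (n : ℝ) ^ ((2.45 : ℝ) +
        Real.logb 2 (1 + ((h : ℝ) - 1) / Real.logb 2 n)) := by
  intro n h hn hh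
  obtain ⟨m, rfl⟩ : ∃ m, h = m + 1 := ⟨h - 1, by omega⟩
  set L := logb 2 n
  have hn1 : (1 : ℝ) ≤ n := by exact_mod_cast (by omega : 1 ≤ n)
  have hL : 0 ≤ L := logb_nonneg one_lt_two hn1
  calc (f n (m + 1) : ℝ) ≤ n * ((Nat.log 2 n + m).choose m : ℕ) := by
        exact_mod_cast WidthRecursion.apply_succ_le_mul_choose_log hf0 hfn0 hrec m n
    _ ≤ n * (exp L * (1 + m / L) ^ L) := by
      gcongr
      exact Nat.choose_add_le_exp_mul_rpow (Nat.log_pos one_lt_two hn) (natLog_le_logb n 2)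
    _ = n ^ (1 + logb 2 (exp 1) + logb 2 (1 + m / L)) :=
      mul_exp_mul_rpow_logb_eq 2 (by positivity) (by positivity)
    _ ≤ n ^ ((2.45 : ℝ) + logb 2 (1 + (((m + 1 : ℕ) : ℝ) - 1) / L)) := by
      push_cast
      rw [add_sub_cancel_right]
      gcongr
      exact one_add_logb_two_exp_one_lt.le
end

section
/- Let f : ℕ → ℕ → ℕ be defined by f(0,h) = 0 for all h, f(n,0) = 1 for all n ≥ 1, and f(n,h) = f(n,h-1) + f(⌊n/2⌋,h) + f(n-1-⌊n/2⌋,h) for all n,h ≥ 1. Then for every real ε with 0 < ε < 1.45 - log₂ e, there exists a real constant c > 0 such that for all natural numbers n ≥ 2 and h ≥ 1 with h ≥ c · log₂ n, it holds (viewing values as reals) that f(n,h) ≤ n^(2.45 - ε + log₂(h / log₂ n)), where log₂ is the real base-2 logarithm and the power is a real power. -/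
/-!
Unfolding the recursion in `h` gives `f(n,h) ≤ n · C(h + d, d)` with `d = ⌊log₂ n⌋`, by Pascal's
rule, since both halves of `n` have `⌊log₂⌋` at most `d - 1`. With `C(m,k) ≤ (e m / k)^k` and the
monotonicity of `x ↦ x log (e (h + x) / x)`, the logarithm of this bound is at most
`L (log 2 + 1 + log (h / L) + L / h)` for `L = log₂ n`, and once `h ≥ c L` the term `L / h ≤ 1 / c`
is absorbed by the slack `(1.45 - ε) log 2 - 1 > 0`.
-/

open Real Set

namespace Nat

theorem choose_add_le_choose_add (m : ℕ) {j j' : ℕ} (h : j ≤ j') :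
    (m + j).choose j ≤ (m + j').choose j' := by
  rw [← Nat.choose_symm_add, ← Nat.choose_symm_add]
  exact Nat.choose_le_choose m (by omega)

theorem choose_le_exp_mul_div_pow (n k : ℕ) : (n.choose k : ℝ) ≤ (exp 1 * n / k) ^ k := by
  rcases Nat.eq_zero_or_pos k with rfl | hk
  · simp
  have hk' : (0 : ℝ) < k := by exact_mod_cast hk
  calc (n.choose k : ℝ) ≤ (n : ℝ) ^ k / k.factorial := Nat.choose_le_pow_div k n
    _ = (n / k : ℝ) ^ k * ((k : ℝ) ^ k / k.factorial) := by rw [div_pow]; field_simp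
    _ ≤ (n / k : ℝ) ^ k * exp k := by gcongr; exact pow_div_factorial_le_exp _ hk'.le k
    _ = (exp 1 * n / k) ^ k := by
      rw [← exp_one_pow, mul_div_assoc, mul_pow, mul_comm]

end Nat

section Recursion

variable {f : ℕ → ℕ → ℕ} (hf0 : ∀ h, f 0 h = 0) (hfn0 : ∀ n, 1 ≤ n → f n 0 = 1)
  (hrec : ∀ n h, 1 ≤ n → 1 ≤ h → f n h = f n (h - 1) + f (n / 2) h + f (n - 1 - n / 2) h)
include hf0 hfn0 hrec

theorem le_mul_choose_log (h n : ℕ) : f n h ≤ n * (h + Nat.log 2 n).choose (Nat.log 2 n) := by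
  induction h generalizing n with
  | zero =>
    rcases Nat.eq_zero_or_pos n with rfl | hn
    · simp [hf0]
    · rw [hfn0 n hn, Nat.zero_add, Nat.choose_self, mul_one]
      exact hn
  | succ h ihh =>
    induction n using Nat.strong_induction_on with
    | _ n ihn =>
    obtain rfl | rfl | hn := (by omega : n = 0 ∨ n = 1 ∨ 2 ≤ n)
    · simp [hf0]
    · simpa [hrec 1 (h + 1) le_rfl (by omega), hf0] using ihh 1
    obtain ⟨k, hk⟩ : ∃ k, Nat.log 2 n = k + 1 := ⟨Nat.log 2 n - 1, by
      have := Nat.log_pos (b := 2) (by omega) hn; omega⟩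
    have child : ∀ m ≤ n / 2, f m (h + 1) ≤ m * (h + 1 + k).choose k := fun m hm => by
      have hlog : Nat.log 2 m ≤ k := by
        have := Nat.log_mono_right (b := 2) hm
        rw [Nat.log_div_base, hk] at this; omega
      exact (ihn m (by omega)).trans
        (Nat.mul_le_mul_left m (Nat.choose_add_le_choose_add (h + 1) hlog))
    have pascal : (h + (k + 1)).choose (k + 1) + (h + 1 + k).choose k
        = (h + 1 + (k + 1)).choose (k + 1) := by
      rw [show h + 1 + (k + 1) = h + (k + 1) + 1 by omega, Nat.choose_succ_succ',
        show h + 1 + k = h + (k + 1) by omega, add_comm]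
    calc f n (h + 1) = f n h + f (n / 2) (h + 1) + f (n - 1 - n / 2) (h + 1) :=
          hrec n (h + 1) (by omega) (by omega)
      _ ≤ n * (h + (k + 1)).choose (k + 1) + n / 2 * (h + 1 + k).choose k
            + (n - 1 - n / 2) * (h + 1 + k).choose k := by
          gcongr
          · simpa [hk] using ihh n
          · exact child _ le_rfl
          · exact child _ (by omega)
      _ ≤ n * ((h + (k + 1)).choose (k + 1) + (h + 1 + k).choose k) := by
          have : n / 2 + (n - 1 - n / 2) ≤ n := by omega
          nlinarith
      _ = n * (h + 1 + Nat.log 2 n).choose (Nat.log 2 n) := by rw [pascal, hk]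

end Recursion

theorem monotoneOn_mul_log_exp_mul_add_div {h : ℝ} (hh : 0 ≤ h) :
    MonotoneOn (fun x => x * log (exp 1 * (h + x) / x)) (Ioi 0) := by
  intro x (hx : 0 < x) y (hy : 0 < y) hxy
  have log_exp_mul (t : ℝ) (ht : 0 < t) : log (exp 1 * t) = 1 + log t := by
    rw [log_mul (exp_pos 1).ne' ht.ne', log_exp]
  simp only [mul_div_assoc]
  rw [log_exp_mul _ (by positivity), log_exp_mul _ (by positivity)]
  have split : log ((h + x) / x) ≤ log ((h + y) / y) + log (y / x) := by
    rw [← log_mul (by positivity) (by positivity)]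
    exact log_le_log (by positivity) (by field_simp; linarith)
  have tangent : x * log (y / x) ≤ y - x := by
    have := log_le_sub_one_of_pos (div_pos hy hx)
    calc x * log (y / x) ≤ x * (y / x - 1) := by gcongr
      _ = y - x := by field_simp
  have hnonneg : 0 ≤ log ((h + y) / y) := log_nonneg (by rw [le_div_iff₀ hy]; linarith)
  nlinarith

theorem log_exp_mul_add_div_le {h L : ℝ} (hh : 0 < h) (hL : 0 < L) :
    log (exp 1 * (h + L) / L) ≤ 1 + log (h / L) + L / h := by
  have hsplit : exp 1 * (h + L) / L = exp 1 * (h / L) * (1 + L / h) := by field_simp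
  rw [hsplit, log_mul (by positivity) (by positivity), log_mul (by positivity) (by positivity),
    log_exp]
  linarith [log_le_sub_one_of_pos (show 0 < 1 + L / h by positivity)]

theorem mul_exp_mul_div_pow_le_rpow {x h δ : ℝ} {d : ℕ} (hx : 0 < x) (hh : 0 < h) (hd : 0 < d)
    (hdL : d ≤ logb 2 x) (hLh : logb 2 x ≤ δ * h) :
    x * (exp 1 * (h + d) / d) ^ d ≤ x ^ (1 + (1 + δ) / log 2 + logb 2 (h / logb 2 x)) := by
  set L := logb 2 x
  have hd' : (0 : ℝ) < d := by exact_mod_cast hd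
  have hL : 0 < L := hd'.trans_le hdL
  have hlog2 : 0 < log 2 := log_pos one_lt_two
  have hlogx : log x = L * log 2 := by simp only [L, logb]; field_simp
  have mono := monotoneOn_mul_log_exp_mul_add_div hh.le (a := (d : ℝ)) hd' hL hdL
  have hLh' : L * (L / h) ≤ L * δ := by gcongr; rwa [div_le_iff₀ hh]
  have := log_exp_mul_add_div_le hh hL
  rw [le_rpow_iff_log_le (by positivity) hx, log_mul hx.ne' (by positivity), log_pow, logb,
    hlogx]
  simp only at mono
  have expand : (1 + (1 + δ) / log 2 + log (h / L) / log 2) * (L * log 2)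
      = L * log 2 + L * (1 + δ + log (h / L)) := by field_simp; ring
  rw [expand]
  nlinarith

theorem stmt_9 (f : ℕ → ℕ → ℕ)
    (hf0 : ∀ h, f 0 h = 0)
    (hfn0 : ∀ n, 1 ≤ n → f n 0 = 1)
    (hrec : ∀ n h, 1 ≤ n → 1 ≤ h →
      f n h = f n (h - 1) + f (n / 2) h + f (n - 1 - n / 2) h) :
    ∀ ε : ℝ, 0 < ε → ε < 1.45 - Real.logb 2 (Real.exp 1) →
      ∃ c : ℝ, 0 < c ∧ ∀ n h : ℕ, 2 ≤ n → 1 ≤ h → c * Real.logb 2 n ≤ h →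
        (f n h : ℝ) ≤ (n : ℝ) ^ ((2.45 : ℝ) - ε + Real.logb 2 ((h : ℝ) / Real.logb 2 n)) := by
  intro ε _ hε
  have hlog2 : 0 < log 2 := log_pos one_lt_two
  set δ := (1.45 - ε) * log 2 - 1
  have hδ : 0 < δ := by
    rw [logb, log_exp, lt_sub_iff_add_lt, ← lt_sub_iff_add_lt', div_lt_iff₀ hlog2] at hε
    exact sub_pos.mpr hε
  refine ⟨1 / δ, by positivity, fun n h hn hh hch => ?_⟩
  have hd : 0 < Nat.log 2 n := Nat.log_pos one_lt_two hn
  have hexp : 1 + (1 + δ) / log 2 = 2.45 - ε := by field_simp; ring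
  calc (f n h : ℝ) ≤ n * ((h + Nat.log 2 n).choose (Nat.log 2 n) : ℕ) := by
        exact_mod_cast le_mul_choose_log hf0 hfn0 hrec h n
    _ ≤ n * (exp 1 * (h + Nat.log 2 n) / Nat.log 2 n) ^ Nat.log 2 n := by
        gcongr
        exact_mod_cast Nat.choose_le_exp_mul_div_pow (h + Nat.log 2 n) (Nat.log 2 n)
    _ ≤ _ := by
        rw [← hexp]
        refine mul_exp_mul_div_pow_le_rpow (by positivity) (by positivity) hd
          (natLog_le_logb n 2) ?_
        rwa [one_div_mul_eq_div, div_le_iff₀' hδ] at hch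
end
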